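/- Let R and S be finite sets of positive integers satisfying the tableau condition. Then the greedy matching of S into R is well defined: for every i ∈ S, when i is processed the set { j ∈ R : j < i and j ≠ f(i′) for every i′ ∈ S with i′ < i } is nonempty. Consequently the greedy matching yields an injective function f : S → R with f(i) < i for every i ∈ S. -/

import Mathlib

open scoped Classical

/-- The `j`-th smallest element (0-indexed) of a finite set of naturals (default `0`). -/
noncomputable def nthSmallest (s : Finset ℕ) (j : ℕ) : ℕ := (s.sort (· ≤ ·)).getD j 0

/-- `(R, S)` satisfies the tableau condition: `|S| ≤ |R|` and for every `j ≤ |S|`, the `j`-th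
smallest element of `S` is greater than the `j`-th smallest element of `R`. -/
def TableauCond (R S : Finset ℕ) : Prop :=
  S.card ≤ R.card ∧ ∀ j < S.card, nthSmallest R j < nthSmallest S j

/-- The greedy matching of `S` into `R`: processing the elements `i` of `S` in increasing
order, `greedy R S i = max { j ∈ R : j < i and j ≠ greedy R S i' for every i' ∈ S with i' < i }`
(with value `0` when this set is empty or `i ∉ S`). -/
noncomputable def greedy (R S : Finset ℕ) (i : ℕ) : ℕ :=
  Nat.strongRecOn i fun i ih =>
    ((R.filter fun j => j < i ∧ ∀ i' (_ : i' ∈ S) (h : i' < i), j ≠ ih i' h).max).unbotD 0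

/-!
When `i ∈ S` is processed, its available partners are the elements of `R` below `i` minus the
images of the elements of `S` below `i`. Since `i` is the `k`-th smallest element of `S` for
`k = #{s ∈ S | s < i}`, the tableau condition at index `k` puts at least `k + 1` elements of `R`
below `i`, so some partner remains. Injectivity and `f i < i` are built into the choice.
-/

open Finset

section NthSmallest

lemma nthSmallest_eq_orderEmbOfFin (s : Finset ℕ) (m : Fin #s) :
    nthSmallest s m = s.orderEmbOfFin rfl m := by
  simp [nthSmallest, orderEmbOfFin_apply]

lemma nthSmallest_mem {s : Finset ℕ} {m : ℕ} (hm : m < #s) : nthSmallest s m ∈ s := by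
  rw [show m = ((⟨m, hm⟩ : Fin #s) : ℕ) from rfl, nthSmallest_eq_orderEmbOfFin]
  exact orderEmbOfFin_mem s rfl _

lemma exists_nthSmallest_eq {s : Finset ℕ} {a : ℕ} (ha : a ∈ s) :
    ∃ m < #s, nthSmallest s m = a := by
  obtain ⟨m, rfl⟩ : a ∈ Set.range (s.orderEmbOfFin rfl) := by simpa using ha
  exact ⟨m, m.2, nthSmallest_eq_orderEmbOfFin s m⟩

lemma card_filter_lt_nthSmallest {s : Finset ℕ} {m : ℕ} (hm : m < #s) :
    #(s.filter (· < nthSmallest s m)) = m := by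
  set f := s.orderEmbOfFin rfl
  have hfilter : s.filter (· < f ⟨m, hm⟩) = (Iio ⟨m, hm⟩).map f.toEmbedding := by
    ext a
    constructor
    · intro ha
      obtain ⟨haS, hlt⟩ := mem_filter.mp ha
      obtain ⟨j, rfl⟩ : a ∈ Set.range f := by simpa [f] using haS
      exact mem_map_of_mem _ (mem_Iio.mpr (f.lt_iff_lt.mp hlt))
    · intro ha
      obtain ⟨j, hj, rfl⟩ := mem_map.mp ha
      exact mem_filter.mpr ⟨orderEmbOfFin_mem s rfl j, f.lt_iff_lt.mpr (mem_Iio.mp hj)⟩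
  rw [nthSmallest_eq_orderEmbOfFin s ⟨m, hm⟩, hfilter, card_map, Fin.card_Iio]

lemma nthSmallest_card_filter_lt {s : Finset ℕ} {a : ℕ} (ha : a ∈ s) :
    nthSmallest s #(s.filter (· < a)) = a := by
  obtain ⟨m, hm, rfl⟩ := exists_nthSmallest_eq ha
  rw [card_filter_lt_nthSmallest hm]

lemma lt_card_filter_lt_of_nthSmallest_lt {s : Finset ℕ} {m x : ℕ} (hm : m < #s)
    (hx : nthSmallest s m < x) : m < #(s.filter (· < x)) := by
  conv_lhs => rw [← card_filter_lt_nthSmallest hm]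
  refine card_lt_card (ssubset_iff_of_subset ?_ |>.mpr ⟨nthSmallest s m, ?_, ?_⟩)
  · intro a ha
    obtain ⟨haS, hlt⟩ := mem_filter.mp ha
    exact mem_filter.mpr ⟨haS, hlt.trans hx⟩
  · exact mem_filter.mpr ⟨nthSmallest_mem hm, hx⟩
  · simp

end NthSmallest

lemma TableauCond.card_filter_lt_lt {R S : Finset ℕ} (h : TableauCond R S) {i : ℕ}
    (hi : i ∈ S) : #(S.filter (· < i)) < #(R.filter (· < i)) := by
  have hk : #(S.filter (· < i)) < #S :=
    card_lt_card (filter_ssubset.mpr ⟨i, hi, lt_irrefl i⟩)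
  have hR : nthSmallest R #(S.filter (· < i)) < i :=
    (h.2 _ hk).trans_eq (nthSmallest_card_filter_lt hi)
  exact lt_card_filter_lt_of_nthSmallest_lt (hk.trans_le h.1) hR

section Greedy

variable (R S : Finset ℕ)

noncomputable def greedyAvailable (i : ℕ) : Finset ℕ :=
  R.filter fun j => j < i ∧ ∀ i' ∈ S, i' < i → j ≠ greedy R S i'

lemma greedy_eq_max (i : ℕ) : greedy R S i = (greedyAvailable R S i).max.unbotD 0 := by
  rw [greedy, Nat.strongRecOn_eq]
  rfl

variable {R S}

lemma greedy_mem_greedyAvailable {i : ℕ} (h : (greedyAvailable R S i).Nonempty) :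
    greedy R S i ∈ greedyAvailable R S i := by
  obtain ⟨b, hb⟩ := max_of_nonempty h
  rw [greedy_eq_max, hb]
  exact mem_of_max hb

lemma greedyAvailable_nonempty_of_card_lt {i : ℕ}
    (h : #(S.filter (· < i)) < #(R.filter (· < i))) : (greedyAvailable R S i).Nonempty := by
  have hused : #((S.filter (· < i)).image (greedy R S)) < #(R.filter (· < i)) :=
    card_image_le.trans_lt h
  obtain ⟨j, hj, hfree⟩ := exists_mem_notMem_of_card_lt_card hused
  obtain ⟨hjR, hji⟩ := mem_filter.mp hj
  refine ⟨j, mem_filter.mpr ⟨hjR, hji, fun i' hi' hlt heq => hfree ?_⟩⟩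
  exact mem_image.mpr ⟨i', mem_filter.mpr ⟨hi', hlt⟩, heq.symm⟩

end Greedy

theorem greedy_matching_well_defined_general (R S : Finset ℕ)
    (h : TableauCond R S) :
    (∀ i ∈ S, (R.filter fun j => j < i ∧ ∀ i' ∈ S, i' < i → j ≠ greedy R S i').Nonempty) ∧
    (∀ i ∈ S, greedy R S i ∈ R) ∧
    (∀ i ∈ S, greedy R S i < i) ∧
    (∀ i ∈ S, ∀ i' ∈ S, greedy R S i = greedy R S i' → i = i') := by
  have hne : ∀ i ∈ S, (greedyAvailable R S i).Nonempty := fun i hi =>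
    greedyAvailable_nonempty_of_card_lt (h.card_filter_lt_lt hi)
  have hmem : ∀ i ∈ S, greedy R S i ∈ greedyAvailable R S i := fun i hi =>
    greedy_mem_greedyAvailable (hne i hi)
  simp only [greedyAvailable, mem_filter] at hmem
  refine ⟨hne, fun i hi => (hmem i hi).1, fun i hi => (hmem i hi).2.1, ?_⟩
  intro i hi i' hi' heq
  rcases lt_trichotomy i i' with hlt | rfl | hlt
  · exact absurd heq.symm ((hmem i' hi').2.2 i hi hlt)
  · rfl
  · exact absurd heq ((hmem i hi).2.2 i' hi' hlt)

/-- The greedy matching of `S` into `R` is well defined: for every `i ∈ S` the set of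
available partners is nonempty, and the resulting function is an injective map `S → R`
with `greedy R S i < i` for every `i ∈ S`. -/
theorem greedy_matching_well_defined (R S : Finset ℕ)
    (hRpos : ∀ x ∈ R, 0 < x) (hSpos : ∀ x ∈ S, 0 < x)
    (h : TableauCond R S) :
    (∀ i ∈ S, (R.filter fun j => j < i ∧ ∀ i' ∈ S, i' < i → j ≠ greedy R S i').Nonempty) ∧
    (∀ i ∈ S, greedy R S i ∈ R) ∧
    (∀ i ∈ S, greedy R S i < i) ∧
    (∀ i ∈ S, ∀ i' ∈ S, greedy R S i = greedy R S i' → i = i') :=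
  greedy_matching_well_defined_general R S h
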